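/- Let P(A, θ) = Σ_{j=0}^{i} θ_j A^j. Under the assumptions max_{1≤k≤M} ‖A^k‖₂ ≤ L (with L ≥ 1, i ≤ M), ‖A − Â‖₂ ≤ δ_A, ‖θ‖₁ ≤ ρ_θ, and ‖θ − θ̂‖₁ ≤ δ_θ, we have the stability bound ‖P(Â, θ̂) − P(A, θ)‖₂ ≤ ρ_θ δ_A L̂_M(δ_A) + δ_θ (L + δ_A L̂_M(δ_A)), where L̂_M(δ) = max_{1≤k≤M} ((L+δ)^k − L^k)/δ. -/

import Mathlib

noncomputable def Lhat (L δ : ℝ) (M : ℕ) : ℝ :=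
  ⨆ k ∈ Finset.Icc 1 M, ((L + δ) ^ k - L ^ k) / δ

/-!
From `b^(k+1) - a^(k+1) = b^k (b - a) + (b^k - a^k) a` and `‖b^k‖ ≤ L + ‖b^k - a^k‖`, induction
on `k` gives `‖b^k - a^k‖ ≤ (L + δ)^k - L^k ≤ δ L̂_M(δ)`; the inductive step needs `L ≤ L^k`,
hence `L ≥ 1`. Splitting `P(b, θ̂) - P(a, θ) = ∑ (θ̂ⱼ - θⱼ) b^j + ∑ θⱼ (b^j - a^j)`, the first sum
is at most `δ_θ (L + δ L̂_M(δ))` and the second at most `ρ_θ δ L̂_M(δ)`.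
-/

open Finset

theorem le_biSup_finset {ι α : Type*} [ConditionallyCompleteLattice α] {f : ι → α}
    {s : Finset ι} {i : ι} (hi : i ∈ s) : f i ≤ ⨆ k ∈ s, f k :=
  le_ciSup₂ (f := fun k (_ : k ∈ s) => f k)
    ((s.finite_toSet.image f).bddAbove.mono (by
      simp only [Set.iUnion_subset_iff, Set.range_subset_iff]
      exact fun k hk => Set.mem_image_of_mem f hk)) i hi

theorem Lhat_nonneg {L δ : ℝ} (hL : 0 ≤ L) (hδ : 0 ≤ δ) (M : ℕ) : 0 ≤ Lhat L δ M :=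
  Real.iSup_nonneg fun k => Real.iSup_nonneg fun _ =>
    div_nonneg (sub_nonneg.2 (pow_le_pow_left₀ hL (le_add_of_nonneg_right hδ) k)) hδ

theorem pow_sub_pow_le_mul_Lhat {L δ : ℝ} (hδ : 0 < δ) {M k : ℕ} (hk : k ∈ Icc 1 M) :
    (L + δ) ^ k - L ^ k ≤ δ * Lhat L δ M := by
  calc (L + δ) ^ k - L ^ k = δ * (((L + δ) ^ k - L ^ k) / δ) := by field_simp
    _ ≤ δ * Lhat L δ M := by
      gcongr
      exact le_biSup_finset (f := fun k => ((L + δ) ^ k - L ^ k) / δ) hk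

section NormedRing

variable {R : Type*} [NormedRing R]

theorem norm_pow_sub_pow_le {a b : R} {L δ : ℝ} {M : ℕ} (hL : 1 ≤ L) (hδ : 0 ≤ δ)
    (ha : ∀ k, 1 ≤ k → k ≤ M → ‖a ^ k‖ ≤ L) (hab : ‖b - a‖ ≤ δ) :
    ∀ k ≤ M, ‖b ^ k - a ^ k‖ ≤ (L + δ) ^ k - L ^ k := by
  intro k
  induction k with
  | zero => simp
  | succ k ih =>
    intro hkM
    rcases Nat.eq_zero_or_pos k with rfl | hk
    · simpa using hab
    have ih := ih (by omega)
    have ha1 : ‖a‖ ≤ L := by simpa using ha 1 le_rfl (by omega)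
    have hbk : ‖b ^ k‖ ≤ L + ((L + δ) ^ k - L ^ k) :=
      (norm_le_insert' _ _).trans (add_le_add (ha k hk (by omega)) ih)
    have hLk : L ≤ L ^ k := le_self_pow₀ hL hk.ne'
    have hdecomp : b ^ (k + 1) - a ^ (k + 1) = b ^ k * (b - a) + (b ^ k - a ^ k) * a := by
      rw [pow_succ, pow_succ, mul_sub, sub_mul]; abel
    calc ‖b ^ (k + 1) - a ^ (k + 1)‖
        ≤ ‖b ^ k‖ * ‖b - a‖ + ‖b ^ k - a ^ k‖ * ‖a‖ := by
          rw [hdecomp]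
          exact (norm_add_le _ _).trans (add_le_add (norm_mul_le _ _) (norm_mul_le _ _))
      _ ≤ (L + ((L + δ) ^ k - L ^ k)) * δ + ((L + δ) ^ k - L ^ k) * L := by
          gcongr
          · exact (norm_nonneg _).trans hbk
          · exact (norm_nonneg _).trans ih
      _ ≤ (L + δ) ^ (k + 1) - L ^ (k + 1) := by
          rw [pow_succ, pow_succ]
          nlinarith [mul_nonneg hδ (sub_nonneg.mpr hLk)]

theorem norm_pow_sub_pow_le_mul_Lhat {a b : R} {L δ : ℝ} {M : ℕ} (hL : 1 ≤ L) (hδ : 0 < δ)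
    (ha : ∀ k, 1 ≤ k → k ≤ M → ‖a ^ k‖ ≤ L) (hab : ‖b - a‖ ≤ δ) :
    ∀ k ≤ M, ‖b ^ k - a ^ k‖ ≤ δ * Lhat L δ M := by
  intro k hkM
  rcases Nat.eq_zero_or_pos k with rfl | hk
  · simpa using mul_nonneg hδ.le (Lhat_nonneg (by linarith) hδ.le M)
  exact (norm_pow_sub_pow_le hL hδ.le ha hab k hkM).trans
    (pow_sub_pow_le_mul_Lhat hδ (mem_Icc.2 ⟨hk, hkM⟩))

end NormedRing

theorem norm_sum_smul_le {ι E : Type*} [SeminormedAddCommGroup E] [NormedSpace ℝ E]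
    (s : Finset ι) (c : ι → ℝ) (u : ι → E) {C : ℝ} (hu : ∀ j ∈ s, ‖u j‖ ≤ C) :
    ‖∑ j ∈ s, c j • u j‖ ≤ (∑ j ∈ s, |c j|) * C := by
  rw [sum_mul]
  refine (norm_sum_le _ _).trans (sum_le_sum fun j hj => ?_)
  rw [norm_smul, Real.norm_eq_abs]
  exact mul_le_mul_of_nonneg_left (hu j hj) (abs_nonneg _)

theorem stmt3 {N i M : ℕ}
    (A Ahat : EuclideanSpace ℝ (Fin N) →L[ℝ] EuclideanSpace ℝ (Fin N))
    (θ θhat : Fin (i + 1) → ℝ) (L δA ρθ δθ : ℝ)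
    (hL : 1 ≤ L) (hiM : i ≤ M) (hδ : 0 < δA)
    (hA : ∀ k : ℕ, 1 ≤ k → k ≤ M → ‖A ^ k‖ ≤ L)
    (hE : ‖A - Ahat‖ ≤ δA)
    (hθ : ∑ j, |θ j| ≤ ρθ)
    (hθd : ∑ j, |θ j - θhat j| ≤ δθ) :
    ‖(∑ j : Fin (i + 1), θhat j • Ahat ^ (j : ℕ)) -
        (∑ j : Fin (i + 1), θ j • A ^ (j : ℕ))‖ ≤
      ρθ * δA * Lhat L δA M + δθ * (L + δA * Lhat L δA M) := by
  set C := δA * Lhat L δA M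
  have hjM (j : Fin (i + 1)) : (j : ℕ) ≤ M := by omega
  have hdiff := norm_pow_sub_pow_le_mul_Lhat hL hδ hA (norm_sub_rev A Ahat ▸ hE)
  have hApow : ∀ k ≤ M, ‖A ^ k‖ ≤ L := by
    rintro (_ | k) hk
    · rw [pow_zero, ContinuousLinearMap.one_def]
      exact ContinuousLinearMap.norm_id_le.trans hL
    · exact hA _ k.succ_pos hk
  have hAhat (k : ℕ) (hk : k ≤ M) : ‖Ahat ^ k‖ ≤ L + C :=
    (norm_le_insert' _ _).trans (add_le_add (hApow k hk) (hdiff k hk))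
  have hsplit : (∑ j : Fin (i + 1), θhat j • Ahat ^ (j : ℕ)) - ∑ j, θ j • A ^ (j : ℕ) =
      ∑ j, (θhat j - θ j) • Ahat ^ (j : ℕ) + ∑ j, θ j • (Ahat ^ (j : ℕ) - A ^ (j : ℕ)) := by
    rw [← sum_sub_distrib, ← sum_add_distrib]
    exact sum_congr rfl fun j _ => by module
  have hC : 0 ≤ C := mul_nonneg hδ.le (Lhat_nonneg (by linarith) hδ.le M)
  have hθd' : ∑ j, |θhat j - θ j| ≤ δθ := by simpa only [abs_sub_comm] using hθd
  rw [hsplit]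
  calc _ ≤ (∑ j, |θhat j - θ j|) * (L + C) + (∑ j, |θ j|) * C :=
        (norm_add_le _ _).trans (add_le_add
          (norm_sum_smul_le _ _ (fun j : Fin (i + 1) => Ahat ^ (j : ℕ))
            fun j _ => hAhat j (hjM j))
          (norm_sum_smul_le _ _ (fun j : Fin (i + 1) => Ahat ^ (j : ℕ) - A ^ (j : ℕ))
            fun j _ => hdiff j (hjM j)))
    _ ≤ δθ * (L + C) + ρθ * C := by gcongr
    _ = ρθ * δA * Lhat L δA M + δθ * (L + δA * Lhat L δA M) := by ring
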